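/- The Mùi invariant M_{n,{1,…,n}} equals c·a_1 a_2 ⋯ a_n for some nonzero scalar c ∈ F_p, and M_{n,S} ≠ 0 for every subset S ⊆ {1,…,n}. -/

import Mathlib

/-!
Write `M_{n,s} = ι(w_s)`. By the cofactor expansion, `w_s` is `(-1)^s` times the `s`-th column of
the adjugate of the Moore matrix `C`, so `M_{n,1} ⋯ M_{n,n} = ± det (adj C) • a_1 ⋯ a_n
= ± L_n^{n-1} • a_1 ⋯ a_n`, which gives the first claim. For an arbitrary `S`, the product
`M_{n,s_1} ⋯ M_{n,s_r}` times the corresponding product over the complement of `S` is, up to sign,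
that full product, hence nonzero: `L_n ≠ 0`, since only the identity permutation contributes the
monomial `∏ x_i^{p^{i-1}}` to `det C`, and `A` is a free module over the polynomial ring.
-/

set_option maxHeartbeats 1000000
set_option synthInstance.maxHeartbeats 400000

open scoped BigOperators

noncomputable section

/-- The polynomial part `F_p[x_1,…,x_m]`. -/
abbrev Rp (p m : ℕ) := MvPolynomial (Fin m) (ZMod p)

/-- The model `A = F_p[x_1,…,x_m] ⊗ Λ(a_1,…,a_m)` of the mod-`p` cohomology ring of an
elementary abelian `p`-group of rank `m`, realized as the exterior algebra over the
polynomial ring `Rp p m` on the free module of rank `m`. -/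
abbrev Ap (p m : ℕ) := ExteriorAlgebra (Rp p m) (Fin m → Rp p m)

/-- The degree-one exterior generators `a_i`. -/
def aa (p m : ℕ) (i : Fin m) : Ap p m := ExteriorAlgebra.ι (Rp p m) (Pi.single i 1)

/-- The degree-two polynomial generators `x_i`. -/
def xx (p m : ℕ) (i : Fin m) : Ap p m := algebraMap (Rp p m) (Ap p m) (MvPolynomial.X i)

/-- The ordered product `a_{i_1} ⋯ a_{i_r}` over a subset `S = {i_1 < ⋯ < i_r}`. -/
def aProd (p m : ℕ) (S : Finset (Fin m)) : Ap p m := ((S.sort (· ≤ ·)).map (aa p m)).prod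

/-- `N_r = F_p[x_1,…,x_m] ⊗ Λ^r`, the `Rp p m`-submodule of `Ap p m` spanned by the products
`a_{i_1} ⋯ a_{i_r}` with `i_1 < ⋯ < i_r`. -/
def Nsub (p m : ℕ) (r : ℕ) : Submodule (Rp p m) (Ap p m) :=
  Submodule.span (Rp p m) {z | ∃ S : Finset (Fin m), S.card = r ∧ z = aProd p m S}

/-- `a_φ = Σ_i φ_i a_i` for `φ ∈ F_p^m`. -/
def aphi (p m : ℕ) (φ : Fin m → ZMod p) : Ap p m :=
  ∑ i : Fin m, (MvPolynomial.C (φ i) : Rp p m) • aa p m i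

/-- `x_φ = Σ_i φ_i x_i` for `φ ∈ F_p^m`. -/
def xphi (p m : ℕ) (φ : Fin m → ZMod p) : Ap p m :=
  ∑ i : Fin m, (MvPolynomial.C (φ i) : Rp p m) • xx p m i

/-- The essential ideal `Ess(A) = ⋂_{φ ≠ 0} (a_φ, x_φ)`, the intersection over all nonzero
`φ ∈ F_p^m` of the two-sided ideals of `A` generated by `a_φ` and `x_φ`. -/
def Ess (p m : ℕ) : Set (Ap p m) :=
  ⋂ φ ∈ {φ : Fin m → ZMod p | φ ≠ 0},
    (TwoSidedIdeal.span {aphi p m φ, xphi p m φ} : Set (Ap p m))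

/-- The `m × m` Moore matrix with entries `C_{s,i} = x_i^{p^{s-1}}` (zero-based: row `s`
has entries `x_i^{p^s}`). -/
def moore (p m : ℕ) : Matrix (Fin m) (Fin m) (Rp p m) :=
  Matrix.of fun s i => (MvPolynomial.X i) ^ (p ^ (s : ℕ))

/-- `L_m = det C`, the Moore determinant. -/
def Ldet (p m : ℕ) : Rp p m := (moore p m).det

/-- `γ_{s,i}`: the determinant of the minor of the Moore matrix obtained by deleting
row `s` and column `i` (here the rank is `n+1`). -/
def gam (p n : ℕ) (s i : Fin (n + 1)) : Rp p (n + 1) :=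
  ((moore p (n + 1)).submatrix s.succAbove i.succAbove).det

/-- The Mùi invariant `M_{n,s} = Σ_i (-1)^{i+1} γ_{s,i} a_i` (zero-based sign `(-1)^i`). -/
def Mui (p n : ℕ) (s : Fin (n + 1)) : Ap p (n + 1) :=
  ∑ i : Fin (n + 1), (((-1) ^ (i : ℕ) * gam p n s i : Rp p (n + 1))) • aa p (n + 1) i

namespace ExteriorAlgebra

variable {R M : Type*} [CommRing R] [AddCommGroup M] [Module R M]

theorem exists_prod_map_ι_eq_units_smul_of_perm {l₁ l₂ : List M} (h : l₁.Perm l₂) :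
    ∃ ε : ℤˣ, (l₁.map (ι R)).prod = ε • (l₂.map (ι R)).prod := by
  induction h with
  | nil => exact ⟨1, by simp⟩
  | cons x _ ih =>
    obtain ⟨ε, hε⟩ := ih
    refine ⟨ε, ?_⟩
    simp only [List.map_cons, List.prod_cons, hε, Units.smul_def, mul_smul_comm]
  | swap x y l =>
    refine ⟨-1, ?_⟩
    have hxy : ι R y * ι R x = -(ι R x * ι R y) :=
      eq_neg_of_add_eq_zero_left (ι_add_mul_swap y x)
    simp [← mul_assoc, hxy]
  | trans _ _ ih₁ ih₂ =>
    obtain ⟨ε₁, h₁⟩ := ih₁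
    obtain ⟨ε₂, h₂⟩ := ih₂
    exact ⟨ε₁ * ε₂, by rw [h₁, h₂, mul_smul]⟩

theorem prod_map_ι_finRange {m : ℕ} (v : Fin m → M) :
    (((List.finRange m).map v).map (ι R)).prod = ιMulti R m v := by
  rw [ιMulti_apply, List.ofFn_eq_map, List.map_map]
  rfl

instance [Module.Free R M] : Module.Free R (ExteriorAlgebra R M) := by
  classical
  let : LinearOrder (Module.Free.ChooseBasisIndex R M) := linearOrderOfSTO WellOrderingRel
  exact .of_basis (Module.Free.chooseBasis R M).ExteriorAlgebra

theorem ιMulti_basis_ne_zero [Nontrivial R] {m : ℕ} (e : Module.Basis (Fin m) R M) :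
    ιMulti R m e ≠ 0 := by
  have h := e.ExteriorAlgebra.ne_zero Finset.univ
  rwa [basis_apply_ofCard e (Finset.card_fin m), ιMulti_family,
    (Set.powersetCard.ofFinEmbEquiv.symm _).strictMono.eq_id] at h

end ExteriorAlgebra

theorem AlternatingMap.map_eq_basis_det_smul {R M N ι : Type*} [CommRing R] [AddCommGroup M]
    [Module R M] [AddCommGroup N] [Module R N] [Fintype ι] [DecidableEq ι]
    (e : Module.Basis ι R M) (f : M [⋀^ι]→ₗ[R] N) (v : ι → M) : f v = e.det v • f e := by
  suffices f = (LinearMap.toSpanSingleton R N (f e)).compAlternatingMap e.det from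
    congr($this v)
  refine e.ext_alternating fun g hg => ?_
  let σ := Equiv.ofBijective g (Finite.injective_iff_bijective.mp hg)
  change f (e ∘ σ) = e.det (e ∘ σ) • f e
  rw [f.map_perm, e.det.map_perm, e.det_self, Units.smul_def, Units.smul_def, zsmul_one,
    Int.cast_smul_eq_zsmul]

theorem Finset.sort_append_sort_compl_perm {α : Type*} [Fintype α] [LinearOrder α]
    (S : Finset α) :
    (S.sort (· ≤ ·) ++ Sᶜ.sort (· ≤ ·)).Perm (Finset.univ.sort (· ≤ ·)) := by
  refine List.perm_of_nodup_nodup_toFinset_eq ?_ (Finset.sort_nodup _ _) ?_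
  · exact (S.sort_nodup _).append (Sᶜ.sort_nodup _) fun a ha hac => by
      simp_all [Finset.mem_sort]
  · simp [List.toFinset_append]

open MvPolynomial in
theorem MvPolynomial.det_X_pow_ne_zero {R ι : Type*} [CommRing R] [Nontrivial R] [Fintype ι]
    [DecidableEq ι] {e : ι → ℕ} (he : e.Injective) :
    (Matrix.of fun s i : ι => (X i : MvPolynomial ι R) ^ e s).det ≠ 0 := by
  let d : Equiv.Perm ι → ι →₀ ℕ := fun σ => ∑ i, Finsupp.single i (e (σ i))
  have hd : ∀ σ, d σ = d 1 → σ = 1 := fun σ h => Equiv.ext fun i => he <| by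
    simpa [d, Finsupp.finsetSum_apply, Finsupp.single_apply] using DFunLike.congr_fun h i
  have hprod : ∀ σ : Equiv.Perm ι,
      ∏ i, (X i : MvPolynomial ι R) ^ e (σ i) = monomial (d σ) 1 :=
    fun σ => by simp only [d, monomial_sum_one, X_pow_eq_monomial]
  have hterm : ∀ σ : Equiv.Perm ι,
      coeff (d 1) (Equiv.Perm.sign σ •
        ∏ i, (Matrix.of fun s i => (X i : MvPolynomial ι R) ^ e s) (σ i) i) =
          if σ = 1 then 1 else 0 := fun σ => by
    simp only [coeff_smul, Matrix.of_apply, hprod σ, coeff_monomial]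
    by_cases hσ : σ = 1
    · simp [hσ]
    · rw [if_neg (mt (hd σ) hσ), if_neg hσ, smul_zero]
  intro h
  have h1 := congrArg (coeff (d 1)) h
  rw [Matrix.det_apply, coeff_sum, Finset.sum_congr rfl fun σ _ => hterm σ,
    Finset.sum_ite_eq' Finset.univ (1 : Equiv.Perm ι)] at h1
  simp at h1

open ExteriorAlgebra

theorem Ldet_ne_zero (p m : ℕ) [Fact p.Prime] : Ldet p m ≠ 0 :=
  MvPolynomial.det_X_pow_ne_zero
    ((Nat.pow_right_injective (Fact.out : p.Prime).two_le).comp Fin.val_injective)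

def muiVec (p n : ℕ) (s : Fin (n + 1)) : Fin (n + 1) → Rp p (n + 1) :=
  fun i => (-1) ^ (i : ℕ) * gam p n s i

theorem Mui_eq_ι (p n : ℕ) (s : Fin (n + 1)) : Mui p n s = ι (Rp p (n + 1)) (muiVec p n s) := by
  conv_rhs => rw [← Finset.univ_sum_single (muiVec p n s)]
  rw [Mui, map_sum]
  refine Finset.sum_congr rfl fun i _ => ?_
  rw [aa, ← map_smul]
  congr 1
  ext j
  simp [Pi.single_apply, muiVec]

theorem muiVec_eq_adjugate (p n : ℕ) (s i : Fin (n + 1)) :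
    muiVec p n s i = (-1) ^ (s : ℕ) * (moore p (n + 1)).adjugate i s := by
  rw [muiVec, gam, Matrix.adjugate_fin_succ_eq_det_submatrix, ← mul_assoc, ← pow_add,
    show (s : ℕ) + (s + i) = 2 * s + i by ring, pow_add, pow_mul, neg_one_sq, one_pow, one_mul]

theorem det_muiVec (p n : ℕ) :
    (Pi.basisFun (Rp p (n + 1)) (Fin (n + 1))).det (muiVec p n) =
      (-1) ^ (∑ s : Fin (n + 1), (s : ℕ)) * Ldet p (n + 1) ^ n := by
  have h : Matrix.of (muiVec p n) = Matrix.of fun s i : Fin (n + 1) =>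
      (-1) ^ (s : ℕ) * (moore p (n + 1)).adjugate.transpose s i :=
    Matrix.ext fun s i => muiVec_eq_adjugate p n s i
  rw [Pi.basisFun_det]
  change (Matrix.of (muiVec p n)).det = _
  rw [h, Matrix.det_mul_column,
    Matrix.det_transpose, Matrix.det_adjugate, Fintype.card_fin, Nat.add_sub_cancel, Ldet,
    Finset.prod_pow_eq_pow_sum]

theorem prod_map_Mui (p n : ℕ) (l : List (Fin (n + 1))) :
    (l.map (Mui p n)).prod = ((l.map (muiVec p n)).map (ι (Rp p (n + 1)))).prod := by
  rw [List.map_map]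
  exact congrArg _ (List.map_congr_left fun s _ => Mui_eq_ι p n s)

theorem aProd_univ (p m : ℕ) :
    aProd p m Finset.univ = ιMulti (Rp p m) m (Pi.basisFun (Rp p m) (Fin m)) := by
  rw [aProd, Fin.sort_univ, ← prod_map_ι_finRange, List.map_map]
  congr 2
  funext i
  rw [Function.comp_apply, Pi.basisFun_apply]
  rfl

theorem prod_sort_univ_map_Mui (p n : ℕ) :
    ((Finset.univ.sort (· ≤ ·)).map (Mui p n)).prod =
      (Pi.basisFun (Rp p (n + 1)) (Fin (n + 1))).det (muiVec p n) •
        aProd p (n + 1) Finset.univ := by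
  rw [prod_map_Mui, Fin.sort_univ, prod_map_ι_finRange, aProd_univ,
    AlternatingMap.map_eq_basis_det_smul (Pi.basisFun _ _)]

theorem prod_sort_map_Mui_ne_zero (p n : ℕ) [Fact p.Prime] (S : Finset (Fin (n + 1))) :
    ((S.sort (· ≤ ·)).map (Mui p n)).prod ≠ 0 := by
  obtain ⟨ε, hε⟩ := exists_prod_map_ι_eq_units_smul_of_perm (R := Rp p (n + 1))
    (S.sort_append_sort_compl_perm.map (muiVec p n))
  rw [List.map_append, List.map_append, List.prod_append, ← prod_map_Mui, ← prod_map_Mui,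
    ← prod_map_Mui] at hε
  have huniv : ((Finset.univ.sort (· ≤ ·)).map (Mui p n)).prod ≠ 0 := by
    rw [prod_sort_univ_map_Mui, det_muiVec, aProd_univ]
    exact smul_ne_zero (mul_ne_zero (pow_ne_zero _ (neg_ne_zero.mpr one_ne_zero))
      (pow_ne_zero _ (Ldet_ne_zero p _))) (ιMulti_basis_ne_zero _)
  intro h
  rw [h, zero_mul] at hε
  exact huniv ((smul_eq_zero_iff_eq ε).mp hε.symm)

theorem MuiSet_top_and_ne_zero_general (p n : ℕ) [Fact p.Prime]
    (MS : Finset (Fin (n + 1)) → Ap p (n + 1))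
    (hMS : ∀ S : Finset (Fin (n + 1)),
      (Ldet p (n + 1)) ^ S.card • MS S =
        (Ldet p (n + 1)) • ((S.sort (· ≤ ·)).map (Mui p n)).prod) :
    (∃ c : ZMod p, c ≠ 0 ∧
      MS Finset.univ = (MvPolynomial.C c : Rp p (n + 1)) • aProd p (n + 1) Finset.univ) ∧
    ∀ S : Finset (Fin (n + 1)), MS S ≠ 0 := by
  have hL : Ldet p (n + 1) ≠ 0 := Ldet_ne_zero p (n + 1)
  refine ⟨⟨(-1) ^ (∑ s : Fin (n + 1), (s : ℕ)),
    pow_ne_zero _ (neg_ne_zero.mpr one_ne_zero), ?_⟩,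
    fun S hS => prod_sort_map_Mui_ne_zero p n S ((smul_eq_zero.mp ?_).resolve_left hL)⟩
  · have htop := hMS Finset.univ
    rw [Finset.card_univ, Fintype.card_fin] at htop
    refine smul_right_injective _ (pow_ne_zero (n + 1) hL) ?_
    dsimp only
    rw [htop, prod_sort_univ_map_Mui, det_muiVec, smul_smul, smul_smul, map_pow, map_neg, map_one]
    congr 1
    ring
  · rw [← hMS, hS, smul_zero]

/-- `M_{n,{1,…,n}}` is a nonzero scalar multiple of `a_1 a_2 ⋯ a_n`, and
`M_{n,S} ≠ 0` for every subset `S` (the rank is `n+1`). -/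
theorem MuiSet_top_and_ne_zero (p n : ℕ) [Fact p.Prime] (hodd : Odd p)
    (MS : Finset (Fin (n + 1)) → Ap p (n + 1))
    (hMS : ∀ S : Finset (Fin (n + 1)),
      (Ldet p (n + 1)) ^ S.card • MS S =
        (Ldet p (n + 1)) • ((S.sort (· ≤ ·)).map (Mui p n)).prod) :
    (∃ c : ZMod p, c ≠ 0 ∧
      MS Finset.univ = (MvPolynomial.C c : Rp p (n + 1)) • aProd p (n + 1) Finset.univ) ∧
    ∀ S : Finset (Fin (n + 1)), MS S ≠ 0 :=
  MuiSet_top_and_ne_zero_general p n MS hMS
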